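/- arXiv:1210.1476 — 7 statements merged into one kernel-verified Lean document; each statement's English description precedes it below -/
import Mathlib

section
/- Let k be a field of prime characteristic p, R = k[x₁,...,xₙ], I = (x₁^p,...,xₙ^p), and let D* be the set of derivations of R/I induced by the partial derivatives ∂/∂xᵢ. Then R/I is D*-simple. -/
open MvPolynomial

lemma my_coeff_pderiv {k : Type*} [CommRing k] {n : ℕ} (i : Fin n) (m : Fin n →₀ ℕ)
    (f : MvPolynomial (Fin n) k) :
    coeff m (pderiv i f) = (m i + 1) * coeff (m + Finsupp.single i 1) f := by
  induction f using MvPolynomial.induction_on' with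
  | monomial s a =>
    rw [pderiv_monomial, coeff_monomial, coeff_monomial]
    by_cases h : s = m + Finsupp.single i 1
    · subst h
      simp [Finsupp.add_apply, Finsupp.single_apply, mul_comm]
    · rw [if_neg h]
      by_cases h2 : s - Finsupp.single i 1 = m
      · rw [if_pos h2]
        have hsi : s i = 0 := by
          by_contra hsi
          apply h
          ext j
          have hthis := congrArg (fun g => g j) h2
          simp only [Finsupp.tsub_apply, Finsupp.single_apply, Finsupp.add_apply] at hthis ⊢
          by_cases hj : i = j
          · subst hj
            rw [if_pos rfl] at hthis ⊢
            omega
          · rw [if_neg hj] at hthis ⊢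
            omega
        simp [hsi]
      · rw [if_neg h2, mul_zero]
  | add f g hf hg => simp [map_add, coeff_add, hf, hg, mul_add]

lemma my_isUnit_mk {k : Type*} [Field k] {p : ℕ} [Fact p.Prime] {n : ℕ}
    (I : Ideal (MvPolynomial (Fin n) k))
    (hI : I = Ideal.span (Set.range fun i : Fin n => MvPolynomial.X i ^ p))
    (f : MvPolynomial (Fin n) k) (hf : coeff 0 f ≠ 0) :
    IsUnit (Ideal.Quotient.mk I f) := by
  set c := coeff 0 f
  set g := f - C c with hg
  have hnil : IsNilpotent (Ideal.Quotient.mk I g) := by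
    have hmem : g ∈ Ideal.span (MvPolynomial.X '' Set.univ : Set (MvPolynomial (Fin n) k)) := by
      rw [mem_ideal_span_X_image]
      intro m hm
      have hm0 : m ≠ 0 := by
        intro h
        rw [MvPolynomial.mem_support_iff] at hm
        apply hm
        rw [h]
        simp [hg, coeff_sub, coeff_C, c]
      obtain ⟨i, hi⟩ := Finsupp.ne_iff.mp hm0
      exact ⟨i, Set.mem_univ i, by simpa using hi⟩
    have : Ideal.Quotient.mk I g ∈ nilradical (MvPolynomial (Fin n) k ⧸ I) := by
      have h1 : Ideal.Quotient.mk I g ∈ Ideal.map (Ideal.Quotient.mk I)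
          (Ideal.span (MvPolynomial.X '' Set.univ)) := Ideal.mem_map_of_mem _ hmem
      refine SetLike.le_def.mp ?_ h1
      rw [Ideal.map_span]
      refine Ideal.span_le.mpr ?_
      rintro y ⟨x, ⟨i, -, rfl⟩, rfl⟩
      simp only [SetLike.mem_coe, mem_nilradical]
      refine ⟨p, ?_⟩
      rw [← map_pow, Ideal.Quotient.eq_zero_iff_mem, hI]
      exact Ideal.subset_span ⟨i, rfl⟩
    exact this
  have hunit : IsUnit (Ideal.Quotient.mk I (C c)) := by
    refine IsUnit.of_mul_eq_one (Ideal.Quotient.mk I (C c⁻¹)) ?_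
    rw [← map_mul, ← map_mul, mul_inv_cancel₀ hf]
    simp
  have := hnil.isUnit_add_right_of_commute hunit (Commute.all _ _)
  simpa [hg, map_sub] using this

lemma my_key {k : Type*} [Field k] {p : ℕ} [Fact p.Prime] [CharP k p] {n : ℕ}
    (I : Ideal (MvPolynomial (Fin n) k))
    (hI : I = Ideal.span (Set.range fun i : Fin n => MvPolynomial.X i ^ p))
    (J : Ideal (MvPolynomial (Fin n) k ⧸ I))
    (hD : ∀ i : Fin n, ∀ f : MvPolynomial (Fin n) k,
      Ideal.Quotient.mk I f ∈ J → Ideal.Quotient.mk I (MvPolynomial.pderiv i f) ∈ J)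
    (d : ℕ) :
    ∀ (f : MvPolynomial (Fin n) k) (m : Fin n →₀ ℕ),
      m.sum (fun _ e => e) ≤ d → coeff m f ≠ 0 → (∀ i, m i < p) →
      Ideal.Quotient.mk I f ∈ J → J = ⊤ := by
  induction d with
  | zero =>
    intro f m hd hc _ hfJ
    have hm : m = 0 := by
      ext i
      have h1 : m i ≤ m.sum (fun _ e => e) := by
        by_cases h : i ∈ m.support
        · exact Finset.single_le_sum (f := fun i => m i) (fun _ _ => Nat.zero_le _) h
        · simp [Finsupp.notMem_support_iff.mp h]
      simp only [Finsupp.coe_zero, Pi.zero_apply]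
      omega
    subst hm
    exact Ideal.eq_top_of_isUnit_mem J hfJ (my_isUnit_mk I hI f hc)
  | succ d ih =>
    intro f m hd hc hlt hfJ
    by_cases hm : m = 0
    · subst hm
      exact Ideal.eq_top_of_isUnit_mem J hfJ (my_isUnit_mk I hI f hc)
    · obtain ⟨i, hi⟩ := Finsupp.ne_iff.mp hm
      simp only [Finsupp.coe_zero, Pi.zero_apply] at hi
      set m' := m - Finsupp.single i 1 with hm'
      have hmi : 1 ≤ m i := Nat.one_le_iff_ne_zero.mpr hi
      have happ : ∀ j, m' j = m j - (if i = j then 1 else 0) := by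
        intro j
        simp [hm', Finsupp.tsub_apply, Finsupp.single_apply]
      have hsum : m = m' + Finsupp.single i 1 := by
        ext j
        rw [Finsupp.add_apply, happ j, Finsupp.single_apply]
        by_cases hj : i = j
        · subst hj; simp; omega
        · simp [hj]
      have hm'i : m' i + 1 = m i := by rw [happ i]; simp; omega
      have hcoeff : coeff m' (pderiv i f) = (m i : k) * coeff m f := by
        rw [my_coeff_pderiv, ← hsum]
        congr 1
        rw [← hm'i]
        push_cast
        ring
      have hne : coeff m' (pderiv i f) ≠ 0 := by
        rw [hcoeff]
        refine mul_ne_zero ?_ hc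
        rw [Ne, CharP.cast_eq_zero_iff k p]
        intro hdvd
        exact absurd (Nat.le_of_dvd (by omega) hdvd) (not_le.mpr (hlt i))
      have hlt' : ∀ j, m' j < p := by
        intro j
        have := hlt j
        rw [happ j]
        omega
      have hd' : m'.sum (fun _ e => e) ≤ d := by
        have hs : m.sum (fun _ e => e) = m'.sum (fun _ e => e) + 1 := by
          rw [hsum, Finsupp.sum_add_index' (by simp) (fun _ _ _ => rfl)]
          simp
        omega
      exact ih (pderiv i f) m' hd' hne hlt' (hD i f hfJ)

set_option synthInstance.maxHeartbeats 1000000 in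
/-- Let `k` be a field of prime characteristic `p`, `R = k[x₁,...,xₙ]`,
`I = (x₁^p,...,xₙ^p)`, and let `D*` be the set of derivations of `R/I` induced by the
partial derivatives `∂/∂xᵢ`.  Then `R/I` is `D*`-simple: the only ideals of `R/I`
stable under all the induced derivations are `(0)` and the whole ring. -/
theorem quotient_by_pth_powers_pderiv_simple (k : Type*) [Field k] (p : ℕ)
    [Fact p.Prime] [CharP k p] (n : ℕ)
    (I : Ideal (MvPolynomial (Fin n) k))
    (hI : I = Ideal.span (Set.range fun i : Fin n => MvPolynomial.X i ^ p))
    (J : Ideal (MvPolynomial (Fin n) k ⧸ I))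
    (hD : ∀ i : Fin n, ∀ f : MvPolynomial (Fin n) k,
      Ideal.Quotient.mk I f ∈ J → Ideal.Quotient.mk I (MvPolynomial.pderiv i f) ∈ J) :
    J = ⊥ ∨ J = ⊤ := by
  by_cases hJ : J = ⊥
  · exact Or.inl hJ
  · refine Or.inr ?_
    obtain ⟨y, hyJ, hy0⟩ := (Submodule.ne_bot_iff J).mp hJ
    obtain ⟨f, rfl⟩ := Ideal.Quotient.mk_surjective y
    have hfI : f ∉ I := by
      intro h
      exact hy0 (Ideal.Quotient.eq_zero_iff_mem.mpr h)
    have hmono : ∃ m ∈ f.support, ∀ i, m i < p := by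
      by_contra h
      push_neg at h
      apply hfI
      rw [hI]
      have heq : (Set.range fun i : Fin n => MvPolynomial.X i ^ p)
          = (fun s => MvPolynomial.monomial s (1 : k)) ''
            (Set.range fun i : Fin n => Finsupp.single i p) := by
        rw [← Set.range_comp]
        refine congrArg Set.range ?_
        funext i
        simp [MvPolynomial.X_pow_eq_monomial]
      rw [heq, MvPolynomial.mem_ideal_span_monomial_image]
      intro m hm
      obtain ⟨i, hi⟩ := h m hm
      exact ⟨Finsupp.single i p, ⟨i, rfl⟩, by
        intro j
        rcases eq_or_ne i j with rfl | hj
        · simpa using hi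
        · simp [Finsupp.single_apply, hj]⟩
    obtain ⟨m, hm, hlt⟩ := hmono
    exact my_key I hI J hD (m.sum fun _ e => e) f m le_rfl
      (MvPolynomial.mem_support_iff.mp hm) hlt hyJ
end

section
/- If R is a commutative ring of prime characteristic p with identity that is D-simple for some set D of derivations, then R has a unique prime ideal; in particular R has Krull dimension 0 and is quasi-local with maximal ideal equal to its nilradical. -/
/-- A commutative ring `R` of prime characteristic `p` that is `D`-simple for some set
`D` of derivations has a unique prime ideal; in particular its Krull dimension is `0`
and it is quasi-local with maximal ideal equal to its nilradical. -/
theorem charP_differentially_simple_unique_prime (R : Type*) [CommRing R] (p : ℕ)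
    [Fact p.Prime] [CharP R p] (D : Set (Derivation ℤ R R))
    (hsimple : ∀ I : Ideal R, (∀ d ∈ D, ∀ r ∈ I, d r ∈ I) → I = ⊥ ∨ I = ⊤) :
    (∃! P : Ideal R, P.IsPrime) ∧ ringKrullDim R = 0 ∧
      ∀ M : Ideal R, M.IsMaximal → M = nilradical R := by
  have hp : p ≠ 1 := (Fact.out : p.Prime).ne_one
  haveI : Nontrivial R := CharP.nontrivial_of_char_ne_one hp
  -- every maximal ideal equals the nilradical
  have hmax : ∀ M : Ideal R, M.IsMaximal → M = nilradical R := by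
    intro M hM
    set I : Ideal R := Ideal.span {x | ∃ m ∈ M, x = m ^ p} with hI
    have hDI : ∀ d ∈ D, ∀ r ∈ I, d r ∈ I := by
      intro d hd r hr
      have key : ∀ r ∈ I, r ∈ I ∧ d r ∈ I := by
        intro r hr
        refine Submodule.span_induction ?_ ?_ ?_ ?_ hr
        · rintro x ⟨m, hm, rfl⟩
          refine ⟨Ideal.subset_span ⟨m, hm, rfl⟩, ?_⟩
          have : d (m ^ p) = p • m ^ (p - 1) • d m := d.leibniz_pow m p
          rw [this]
          have : (p : R) = 0 := CharP.cast_eq_zero R p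
          simp [nsmul_eq_mul, this]
        · simp
        · rintro x y _ _ ⟨hx, hdx⟩ ⟨hy, hdy⟩
          exact ⟨I.add_mem hx hy, by rw [map_add]; exact I.add_mem hdx hdy⟩
        · rintro a x _ ⟨hx, hdx⟩
          refine ⟨I.smul_mem a hx, ?_⟩
          rw [smul_eq_mul, d.leibniz]
          exact I.add_mem (I.smul_mem a hdx) (I.mul_mem_right (d a) hx)
      exact (key r hr).2
    have hIM : I ≤ M := by
      rw [hI, Ideal.span_le]
      rintro x ⟨m, hm, rfl⟩
      exact Ideal.pow_mem_of_mem M hm p (Fact.out : p.Prime).pos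
    have hIbot : I = ⊥ := by
      rcases hsimple I hDI with h | h
      · exact h
      · exact absurd (h ▸ hIM) (fun hle => hM.ne_top (top_le_iff.mp hle))
    apply le_antisymm
    · intro m hm
      have : m ^ p ∈ I := Ideal.subset_span ⟨m, hm, rfl⟩
      rw [hIbot] at this
      exact ⟨p, Ideal.mem_bot.mp this⟩
    · haveI := hM.isPrime
      exact nilradical_le_prime M
  obtain ⟨M, hM⟩ := Ideal.exists_maximal R
  have hnil : (nilradical R).IsMaximal := hmax M hM ▸ hM
  have huniq : ∃! P : Ideal R, P.IsPrime := by
    refine ⟨nilradical R, hnil.isPrime, fun P hP => ?_⟩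
    obtain ⟨N, hN, hPN⟩ := P.exists_le_maximal hP.ne_top
    haveI := hP
    have h1 : nilradical R ≤ P := @nilradical_le_prime _ _ P hP
    have h2 : P ≤ nilradical R := hmax N hN ▸ hPN
    exact le_antisymm h2 h1
  obtain ⟨P, hP, hPu⟩ := huniq
  refine ⟨⟨P, hP, hPu⟩, ?_, hmax⟩
  haveI : Unique (PrimeSpectrum R) :=
    ⟨⟨⟨P, hP⟩⟩, fun x => PrimeSpectrum.ext (hPu x.asIdeal x.isPrime)⟩
  exact Order.krullDim_eq_zero_of_unique
end

section
/- A commutative ring of prime characteristic that is a domain and is D-simple with respect to some set D of derivations is a field. -/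
/-- A commutative domain of prime characteristic that is `D`-simple with respect to
some set `D` of derivations is a field. -/
theorem charP_differentially_simple_domain_isField (R : Type*) [CommRing R] [IsDomain R]
    (p : ℕ) [Fact p.Prime] [CharP R p] (D : Set (Derivation ℤ R R))
    (hsimple : ∀ I : Ideal R, (∀ d ∈ D, ∀ r ∈ I, d r ∈ I) → I = ⊥ ∨ I = ⊤) :
    IsField R := by
  refine ⟨exists_pair_ne R, mul_comm, ?_⟩
  intro a ha
  have hp : p.Prime := Fact.out
  have hdap : ∀ d : Derivation ℤ R R, d (a ^ p) = 0 := by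
    intro d
    rw [Derivation.leibniz_pow]
    have : (p : R) = 0 := CharP.cast_eq_zero R p
    simp [nsmul_eq_mul, this]
  have hstab : ∀ d ∈ D, ∀ r ∈ Ideal.span {a ^ p}, d r ∈ Ideal.span {a ^ p} := by
    intro d _ r hr
    rw [Ideal.mem_span_singleton] at hr ⊢
    obtain ⟨c, rfl⟩ := hr
    rw [Derivation.leibniz, hdap, smul_zero, add_zero, smul_eq_mul]
    exact Dvd.intro _ rfl
  rcases hsimple _ hstab with h | h
  · exfalso
    have : a ^ p ∈ Ideal.span {a ^ p} := Ideal.mem_span_singleton_self _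
    rw [h, Ideal.mem_bot] at this
    exact pow_ne_zero p ha this
  · have h1 : (1 : R) ∈ Ideal.span {a ^ p} := h ▸ Submodule.mem_top
    rw [Ideal.mem_span_singleton] at h1
    obtain ⟨b, hb⟩ := h1
    refine ⟨a ^ (p - 1) * b, ?_⟩
    rw [← mul_assoc, ← pow_succ', Nat.sub_add_cancel hp.one_le]
    exact hb.symm
end

section
/- Let R be a commutative ring, P a prime ideal of R, and D a set of derivations of R, each extended to the localization R_P by the quotient rule. If R is D-simple, then R_P is D-simple. -/
/-- Let `R` be a commutative ring, `P` a prime ideal, and `D = {dᵢ}` a set of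
derivations of `R`, each extended (by the quotient rule) to a derivation `dᵢ'` of the
localization `R_P`.  If `R` is `D`-simple, then `R_P` is `D`-simple. -/
theorem localization_of_differentially_simple (R : Type*) [CommRing R]
    (P : Ideal R) [P.IsPrime] (ι : Type*) (d : ι → Derivation ℤ R R)
    (d' : ι → Derivation ℤ (Localization.AtPrime P) (Localization.AtPrime P))
    (hext : ∀ i r, d' i (algebraMap R (Localization.AtPrime P) r)
      = algebraMap R (Localization.AtPrime P) (d i r))
    (hsimple : ∀ I : Ideal R, (∀ i, ∀ r ∈ I, d i r ∈ I) → I = ⊥ ∨ I = ⊤)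
    (J : Ideal (Localization.AtPrime P)) (hJ : ∀ i, ∀ s ∈ J, d' i s ∈ J) :
    J = ⊥ ∨ J = ⊤ := by
  set f := algebraMap R (Localization.AtPrime P)
  set I := J.comap f with hI
  have hIdiff : ∀ i, ∀ r ∈ I, d i r ∈ I := by
    intro i r hr
    simp only [hI, Ideal.mem_comap] at hr ⊢
    have := hJ i (f r) hr
    rwa [hext i r] at this
  rcases hsimple I hIdiff with h | h
  · left
    ext x
    simp only [Ideal.mem_bot]
    constructor
    · intro hx
      obtain ⟨⟨r, s⟩, rfl⟩ := IsLocalization.mk'_surjective P.primeCompl x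
      have hr : f r ∈ J := by
        have := IsLocalization.mk'_spec (Localization.AtPrime P) r s
        rw [← this]
        exact J.mul_mem_right _ hx
      have : r ∈ I := hr
      rw [h, Ideal.mem_bot] at this
      rw [this]; exact IsLocalization.mk'_zero s
    · rintro rfl; exact J.zero_mem
  · right
    rw [Ideal.eq_top_iff_one]
    have : (1 : R) ∈ I := h ▸ Submodule.mem_top
    have h1 : f 1 ∈ J := this
    simpa using h1
end

section
/- Let R ⊆ S be commutative rings with S integral over R, let d be a derivation of R extending to a derivation of S, let P be a prime ideal of R with d(P) ⊆ P (with everything containing ℚ, i.e., characteristic zero), and let T be a prime ideal of S with T ∩ R = P. Then d(T) ⊆ T. -/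
section Aux

variable {S : Type*} [CommRing S] (d : Derivation ℤ S S)

private lemma iter_add (n : ℕ) (x y : S) :
    (⇑d)^[n] (x + y) = (⇑d)^[n] x + (⇑d)^[n] y := by
  induction n with
  | zero => rfl
  | succ n ih =>
      rw [Function.iterate_succ_apply', Function.iterate_succ_apply',
        Function.iterate_succ_apply', ih, map_add]

private lemma iter_zero (n : ℕ) : (⇑d)^[n] (0 : S) = 0 :=
  Function.iterate_fixed (map_zero _) n

/-- Key Leibniz-type congruence: if the first `i` derivatives of `a` and the first
`j` derivatives of `b` lie in `T`, then the `(i+j)`-th derivative of `a*b` is congruent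
to `C(i+j, i) • (d^[i] a * d^[j] b)` modulo `T`. -/
private lemma key (T : Ideal S) : ∀ n : ℕ, ∀ i j : ℕ, i + j = n → ∀ a b : S,
    (∀ m, m < i → (⇑d)^[m] a ∈ T) → (∀ m, m < j → (⇑d)^[m] b ∈ T) →
    (⇑d)^[n] (a * b) - ((n.choose i : ℕ) : S) * ((⇑d)^[i] a * (⇑d)^[j] b) ∈ T := by
  intro n
  induction n using Nat.strong_induction_on with
  | _ n IH =>
    intro i j hij a b ha hb
    have hd : ∀ x y : S, d (x * y) = x * d y + d x * y := by
      intro x y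
      have := d.leibniz x y
      simpa [smul_eq_mul, mul_comm] using this
    match n, hij with
    | 0, hij =>
        obtain ⟨hi, hj⟩ := Nat.add_eq_zero.mp hij
        subst hi; subst hj
        simpa using T.zero_mem
    | (n' + 1), hij =>
        have hsplit : (⇑d)^[n' + 1] (a * b) =
            (⇑d)^[n'] (a * d b) + (⇑d)^[n'] (d a * b) := by
          rw [Function.iterate_succ_apply, hd, iter_add]
        match i, j, hij with
        | 0, j, hij =>
            obtain rfl : j = n' + 1 := by omega
            have h1 := IH n' (Nat.lt_succ_self n') 0 n' (by omega) a (d b)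
              (fun m hm => absurd hm (Nat.not_lt_zero m))
              (fun m hm => by
                rw [← Function.iterate_succ_apply]
                exact hb (m + 1) (Nat.succ_lt_succ hm))
            have h2 := IH n' (Nat.lt_succ_self n') 0 n' (by omega) (d a) b
              (fun m hm => absurd hm (Nat.not_lt_zero m))
              (fun m hm => hb m (hm.trans (Nat.lt_succ_self n')))
            -- h2 residual : d a * d^[n'] b ∈ T
            have hres : d a * (⇑d)^[n'] b ∈ T :=
              T.mul_mem_left _ (hb n' (Nat.lt_succ_self n'))
            have h2' : (⇑d)^[n'] (d a * b) ∈ T := by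
              have := T.add_mem h2 hres
              simpa using this
            have := T.add_mem h1 h2'
            rw [hsplit]
            simp only [Function.iterate_zero_apply, Nat.choose_zero_right,
              Nat.cast_one, one_mul] at this ⊢
            rw [← Function.iterate_succ_apply] at this
            convert this using 1
            ring
        | (i' + 1), 0, hij =>
            -- i = n' + 1
            have hi' : i' = n' := by omega
            subst hi'
            have h1 := IH i' (Nat.lt_succ_self i') i' 0 (by omega) a (d b)
              (fun m hm => ha m (hm.trans (Nat.lt_succ_self i')))
              (fun m hm => absurd hm (Nat.not_lt_zero m))
            have hres : ((i'.choose i' : ℕ) : S) * ((⇑d)^[i'] a * (⇑d)^[0] (d b)) ∈ T :=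
              T.mul_mem_left _ (T.mul_mem_right _ (ha i' (Nat.lt_succ_self i')))
            have h1' : (⇑d)^[i'] (a * d b) ∈ T := by
              have := T.add_mem h1 hres
              simpa using this
            have h2 := IH i' (Nat.lt_succ_self i') i' 0 (by omega) (d a) b
              (fun m hm => by
                rw [← Function.iterate_succ_apply]
                exact ha (m + 1) (Nat.succ_lt_succ hm))
              (fun m hm => absurd hm (Nat.not_lt_zero m))
            have := T.add_mem h1' h2
            rw [hsplit]
            simp only [Function.iterate_zero_apply, Nat.choose_self,
              Nat.cast_one, one_mul] at this ⊢
            rw [← Function.iterate_succ_apply] at this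
            convert this using 1
            ring
        | (i' + 1), (j' + 1), hij =>
            have hn' : i' + 1 + j' = n' := by omega
            have h1 := IH n' (Nat.lt_succ_self n') (i' + 1) j' hn' a (d b)
              ha
              (fun m hm => by
                rw [← Function.iterate_succ_apply]
                exact hb (m + 1) (Nat.succ_lt_succ hm))
            have h2 := IH n' (Nat.lt_succ_self n') i' (j' + 1) (by omega) (d a) b
              (fun m hm => by
                rw [← Function.iterate_succ_apply]
                exact ha (m + 1) (Nat.succ_lt_succ hm))
              hb
            have hsum := T.add_mem h1 h2
            rw [hsplit]
            rw [← Function.iterate_succ_apply d j' b,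
              ← Function.iterate_succ_apply d i' a] at hsum
            convert hsum using 1
            rw [show (n' + 1).choose (i' + 1) = n'.choose i' + n'.choose (i' + 1) from
              Nat.choose_succ_succ _ _]
            push_cast
            ring
  termination_by n => n

end Aux

/-- Let `R ⊆ S` be commutative algebras over a field `k` of characteristic zero with
`S` integral over `R`, let `d` be a derivation of `S` restricting to a derivation of
`R`, let `P` be a prime `d`-ideal of `R`, and let `T` be a prime ideal of `S` lying
over `P`.  Then `d(T) ⊆ T`. -/
theorem derivation_stabilizes_prime_lying_over (k R S : Type*) [Field k] [CharZero k]
    [CommRing R] [CommRing S] [Algebra k R] [Algebra k S] [Algebra R S]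
    [IsScalarTower k R S] [Algebra.IsIntegral R S]
    (dR : Derivation ℤ R R) (dS : Derivation ℤ S S)
    (hcompat : ∀ r : R, dS (algebraMap R S r) = algebraMap R S (dR r))
    (P : Ideal R) [P.IsPrime] (hP : ∀ r ∈ P, dR r ∈ P)
    (T : Ideal S) [T.IsPrime] (hT : T.comap (algebraMap R S) = P) :
    ∀ t ∈ T, dS t ∈ T := by
  classical
  -- natural number naturals are units in `S` (char zero via `k`)
  have hunit : ∀ c : ℕ, 0 < c → IsUnit ((c : ℕ) : S) := by
    intro c hc
    have hq : IsUnit ((c : ℚ)) := by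
      simpa [isUnit_iff_ne_zero] using (Nat.cast_pos.mpr hc : (0 : ℚ) < c).ne'
    have := hq.map ((algebraMap k S).comp (algebraMap ℚ k))
    simpa [map_natCast] using this
  -- the ideal Q of elements all of whose derivatives lie in T
  set Q : Ideal S :=
    { carrier := {s | ∀ n : ℕ, (⇑dS)^[n] s ∈ T}
      add_mem' := fun {x y} hx hy n => by
        rw [iter_add]; exact T.add_mem (hx n) (hy n)
      zero_mem' := fun n => by rw [iter_zero]; exact T.zero_mem
      smul_mem' := fun c x hx n => by
        have h := key dS T n 0 n (by omega) c x (fun m hm => absurd hm (Nat.not_lt_zero m))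
          (fun m _ => hx m)
        have hres : ((n.choose 0 : ℕ) : S) * ((⇑dS)^[0] c * (⇑dS)^[n] x) ∈ T :=
          T.mul_mem_left _ (T.mul_mem_left _ (hx n))
        have := T.add_mem h hres
        simpa [smul_eq_mul] using this } with hQ
  have hQmem : ∀ s : S, s ∈ Q ↔ ∀ n : ℕ, (⇑dS)^[n] s ∈ T := fun s => Iff.rfl
  have hQsubT : Q ≤ T := fun s hs => by simpa using (hQmem s).mp hs 0
  -- Q is prime
  have hQprime : Q.IsPrime := by
    constructor
    · intro h
      have := (hQmem 1).mp (h ▸ Submodule.mem_top) 0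
      simp only [Function.iterate_zero_apply] at this
      exact (inferInstance : T.IsPrime).ne_top (T.eq_top_iff_one.mpr this)
    · intro a b hab
      by_contra hcon
      push_neg at hcon
      obtain ⟨hna, hnb⟩ := hcon
      have hea : ∃ m, (⇑dS)^[m] a ∉ T := by
        by_contra h; push_neg at h; exact hna ((hQmem a).mpr h)
      have heb : ∃ m, (⇑dS)^[m] b ∉ T := by
        by_contra h; push_neg at h; exact hnb ((hQmem b).mpr h)
      set i := Nat.find hea with hi
      set j := Nat.find heb with hj
      have hia : (⇑dS)^[i] a ∉ T := Nat.find_spec hea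
      have hjb : (⇑dS)^[j] b ∉ T := Nat.find_spec heb
      have hlta : ∀ m, m < i → (⇑dS)^[m] a ∈ T := fun m hm => by
        by_contra h; exact absurd (Nat.find_le h) (not_le.mpr hm)
      have hltb : ∀ m, m < j → (⇑dS)^[m] b ∈ T := fun m hm => by
        by_contra h; exact absurd (Nat.find_le h) (not_le.mpr hm)
      have hk := key dS T (i + j) i j rfl a b hlta hltb
      have hmem : (⇑dS)^[i + j] (a * b) ∈ T := (hQmem _).mp hab (i + j)
      have hCx : (((i + j).choose i : ℕ) : S) * ((⇑dS)^[i] a * (⇑dS)^[j] b) ∈ T := by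
        have := T.sub_mem hmem hk
        simpa using this
      have hC : IsUnit (((i + j).choose i : ℕ) : S) :=
        hunit _ (Nat.choose_pos (Nat.le_add_right i j))
      have hx : (⇑dS)^[i] a * (⇑dS)^[j] b ∈ T := by
        rcases hC with ⟨u, hu⟩
        have h2 : ((u⁻¹ : Sˣ) : S) * ((((i + j).choose i : ℕ) : S) *
            ((⇑dS)^[i] a * (⇑dS)^[j] b)) ∈ T := T.mul_mem_left _ hCx
        rwa [← hu, ← mul_assoc, Units.inv_mul, one_mul] at h2
      rcases (inferInstance : T.IsPrime).mem_or_mem hx with h | h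
      · exact hia h
      · exact hjb h
  -- comap of Q is P
  have hQcomap : Q.comap (algebraMap R S) = P := by
    apply le_antisymm
    · calc Q.comap (algebraMap R S) ≤ T.comap (algebraMap R S) := Ideal.comap_mono hQsubT
        _ = P := hT
    · intro r hr
      have hiter : ∀ n : ℕ, (⇑dS)^[n] (algebraMap R S r) = algebraMap R S ((⇑dR)^[n] r) := by
        intro n
        induction n with
        | zero => rfl
        | succ n ih =>
            rw [Function.iterate_succ_apply', ih, hcompat, Function.iterate_succ_apply']
      have hPiter : ∀ n : ℕ, (⇑dR)^[n] r ∈ P := by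
        intro n
        induction n with
        | zero => exact hr
        | succ n ih => rw [Function.iterate_succ_apply']; exact hP _ ih
      show algebraMap R S r ∈ Q
      intro n
      rw [hiter n]
      have : (⇑dR)^[n] r ∈ T.comap (algebraMap R S) := hT ▸ hPiter n
      exact this
  -- incomparability: T ≤ Q hence T = Q
  have hTQ : T ≤ Q := by
    by_contra h
    obtain ⟨t, htT, htQ⟩ := SetLike.not_le_iff_exists.mp h
    haveI := hQprime
    have hlt := Ideal.comap_lt_comap_of_integral_mem_sdiff (I := Q) (J := T)
      hQsubT ⟨htT, htQ⟩ (Algebra.IsIntegral.isIntegral (R := R) t)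
    rw [hQcomap, hT] at hlt
    exact lt_irrefl _ hlt
  intro t ht
  have := (hQmem t).mp (hTQ ht) 1
  simpa using this
end

section
/- Let R = k[y₁,...,yₙ] be a finitely generated algebra over a field k of characteristic zero, d a k-derivation of R, and M a maximal ideal of R with d(M) ⊆ M. Then d(yᵢ) ∈ M for all i = 1,...,n. -/
/-- Let `R = k[y₁,...,yₙ]` be a finitely generated algebra over a field `k` of
characteristic zero, `d` a `k`-derivation of `R`, and `M` a maximal ideal of `R`
invariant under `d`.  Then `d(yᵢ) ∈ M` for all `i`. -/
theorem deriv_of_generators_mem_invariant_maximal (k R : Type*) [Field k] [CharZero k]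
    [CommRing R] [Algebra k R] (n : ℕ) (y : Fin n → R)
    (hgen : Algebra.adjoin k (Set.range y) = ⊤)
    (d : Derivation k R R) (M : Ideal R) [M.IsMaximal]
    (hM : ∀ r ∈ M, d r ∈ M) :
    ∀ i, d (y i) ∈ M := by
  intro i
  have hft : Algebra.FiniteType k R :=
    ⟨⟨(Set.finite_range y).toFinset, by rwa [Set.Finite.coe_toFinset]⟩⟩
  letI : Field (R ⧸ M) := Ideal.Quotient.field M
  have hftL : Algebra.FiniteType k (R ⧸ M) :=
    haveI := hft; Algebra.FiniteType.of_surjective (Ideal.Quotient.mkₐ k M)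
      (Ideal.Quotient.mkₐ_surjective k M)
  have hfin : Module.Finite k (R ⧸ M) := finite_of_finite_type_of_isJacobsonRing k (R ⧸ M)
  set x : R ⧸ M := Ideal.Quotient.mk M (y i) with hx
  have hint : IsIntegral k x := IsIntegral.of_finite k x
  set p : Polynomial k := minpoly k x with hp
  have hirr : Irreducible p := minpoly.irreducible hint
  have hsep : p.Separable := hirr.separable
  obtain ⟨a, b, hab⟩ := hsep
  -- the derivative of p does not vanish at x
  have hx0 : Polynomial.aeval x p = 0 := minpoly.aeval k x
  have hderiv_ne : Polynomial.aeval x (Polynomial.derivative p) ≠ 0 := by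
    intro h0
    have := congrArg (Polynomial.aeval x) hab
    simp [hx0, h0] at this
  -- `p(y i) ∈ M`
  have hmk : ∀ q : Polynomial k,
      Ideal.Quotient.mk M (Polynomial.aeval (y i) q) = Polynomial.aeval x q := by
    intro q
    exact (Polynomial.aeval_algHom_apply (Ideal.Quotient.mkₐ k M) (y i) q).symm
  have hpM : Polynomial.aeval (y i) p ∈ M := by
    rw [← Ideal.Quotient.eq_zero_iff_mem, hmk, hx0]
  -- `p'(y i) ∉ M`
  have hp'M : Polynomial.aeval (y i) (Polynomial.derivative p) ∉ M := by
    intro hmem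
    exact hderiv_ne (by rw [← hmk, Ideal.Quotient.eq_zero_iff_mem.mpr hmem])
  -- apply the derivation
  have hd : d (Polynomial.aeval (y i) p) ∈ M := hM _ hpM
  rw [Derivation.map_aeval] at hd
  have hprime : M.IsPrime := Ideal.IsMaximal.isPrime ‹M.IsMaximal›
  rcases hprime.mem_or_mem (by simpa [smul_eq_mul] using hd) with h | h
  · exact absurd h hp'M
  · exact h
end

section
/- Let R be a ring, d a derivation of R, S = R[x; d] the skew polynomial ring of derivation type, and d₁ another derivation of R. Then d₁ extends to a derivation of S with d₁(x) = 0 (and acting on coefficients) if and only if d₁ ∘ d = d ∘ d₁. -/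
/-- Let `R` be a ring, `d` a derivation of `R`, `S = R[x; d]` the skew polynomial
ring of derivation type (encoded by the skew relation `x r = r x + d(r)` together
with unique representation of elements of `S` as left polynomials in `x`), and let
`d₁` be another derivation of `R`.  Then `d₁` extends to a derivation of `S` with
`d₁(x) = 0` if and only if `d₁ ∘ d = d ∘ d₁`. -/
theorem extend_derivation_to_skew_poly_iff_commute (R S : Type*) [Ring R] [Ring S]
    (d : R → R) (hdadd : ∀ a b : R, d (a + b) = d a + d b)
    (hdleib : ∀ a b : R, d (a * b) = a * d b + d a * b)
    (d₁ : R → R) (hd₁add : ∀ a b : R, d₁ (a + b) = d₁ a + d₁ b)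
    (hd₁leib : ∀ a b : R, d₁ (a * b) = a * d₁ b + d₁ a * b)
    (ι : R →+* S) (hι : Function.Injective ι) (x : S)
    (hx : ∀ r : R, x * ι r = ι r * x + ι (d r))
    (hrep : ∀ s : S, ∃! c : ℕ →₀ R, s = c.sum fun i a => ι a * x ^ i) :
    (∃ D : S → S, (∀ a b : S, D (a + b) = D a + D b) ∧
        (∀ a b : S, D (a * b) = a * D b + D a * b) ∧
        (∀ r : R, D (ι r) = ι (d₁ r)) ∧ D x = 0) ↔
      ∀ r : R, d₁ (d r) = d (d₁ r) := by
  constructor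
  · rintro ⟨D, hDadd, hDleib, hDι, hDx⟩ r
    apply hι
    have h1 := congrArg D (hx r)
    rw [hDleib, hDadd, hDleib] at h1
    simp only [hDι, hDx] at h1
    rw [hx (d₁ r)] at h1
    simp only [zero_mul, mul_zero, add_zero, zero_add] at h1
    exact (add_left_cancel h1).symm
  · intro hcomm
    -- basic facts about d₁
    have hd₁0 : d₁ 0 = 0 := by
      have h := hd₁add 0 0
      rw [add_zero] at h
      exact (left_eq_add.mp h)
    have hd₁1 : d₁ 1 = 0 := by
      have h := hd₁leib 1 1
      simp only [mul_one, one_mul] at h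
      exact (left_eq_add.mp h)
    set f : ℕ → R → S := fun i a => ι a * x ^ i with hf
    set g : ℕ → R → S := fun i a => ι (d₁ a) * x ^ i with hg
    set rep : S → (ℕ →₀ R) := fun s => (hrep s).choose with hrepdef
    have hrep1 : ∀ s : S, s = (rep s).sum f := fun s => (hrep s).choose_spec.1
    have hrep2 : ∀ (s : S) (c : ℕ →₀ R), s = c.sum f → c = rep s :=
      fun s c h => (hrep s).choose_spec.2 c h
    set D : S → S := fun s => (rep s).sum g with hD
    have hDsum : ∀ c : ℕ →₀ R, D (c.sum f) = c.sum g := by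
      intro c
      show (rep (c.sum f)).sum g = c.sum g
      rw [← hrep2 (c.sum f) c rfl]
    have hrepadd : ∀ a b : S, rep (a + b) = rep a + rep b := by
      intro a b
      refine (hrep2 (a + b) (rep a + rep b) ?_).symm
      rw [Finsupp.sum_add_index' (by intro i; simp [hf]) (by intro i a b; simp [hf, add_mul])]
      rw [← hrep1, ← hrep1]
    have hDadd : ∀ a b : S, D (a + b) = D a + D b := by
      intro a b
      show (rep (a+b)).sum g = (rep a).sum g + (rep b).sum g
      rw [hrepadd,
        Finsupp.sum_add_index' (by intro i; simp [hg, hd₁0]) (by intro i a b; simp [hg, hd₁add, add_mul])]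
    have hDsingle : ∀ (i : ℕ) (a : R), D (ι a * x ^ i) = ι (d₁ a) * x ^ i := by
      intro i a
      have h : (ι a * x ^ i) = (Finsupp.single i a).sum f := by
        rw [Finsupp.sum_single_index (by simp [hf])]
      show (rep (ι a * x ^ i)).sum g = ι (d₁ a) * x ^ i
      rw [← hrep2 _ _ h, Finsupp.sum_single_index (by simp [hg, hd₁0])]
    have hcore : ∀ (i : ℕ) (a b : R) (j : ℕ),
        D ((ι a * x ^ i) * (ι b * x ^ j)) =
          (ι a * x ^ i) * (ι (d₁ b) * x ^ j) + (ι (d₁ a) * x ^ i) * (ι b * x ^ j) := by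
      intro i
      induction i with
      | zero =>
        intro a b j
        simp only [pow_zero, mul_one]
        rw [show ι a * (ι b * x ^ j) = ι (a * b) * x ^ j by rw [map_mul, mul_assoc],
          hDsingle, hd₁leib]
        simp [map_add, map_mul, add_mul, mul_assoc]
      | succ i ih =>
        intro a b j
        have hkey : ∀ (a b : R) (j : ℕ), (ι a * x ^ (i + 1)) * (ι b * x ^ j)
            = (ι a * x ^ i) * (ι b * x ^ (j + 1)) + (ι a * x ^ i) * (ι (d b) * x ^ j) := by
          intro a b j
          have h1 : x * (ι b * x ^ j) = ι b * x ^ (j + 1) + ι (d b) * x ^ j := by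
            rw [← mul_assoc, hx b, add_mul, mul_assoc, ← pow_succ']
          calc (ι a * x ^ (i + 1)) * (ι b * x ^ j)
              = ι a * x ^ i * (x * (ι b * x ^ j)) := by
                rw [pow_succ]; simp [mul_assoc]
            _ = _ := by rw [h1, mul_add]
        rw [hkey a b j, hDadd, ih, ih, hcomm b, hkey a (d₁ b) j, hkey (d₁ a) b j]
        abel
    have hDleib : ∀ s t : S, D (s * t) = s * D t + D s * t := by
      have hD0 : D 0 = 0 := by
        have h := hDadd 0 0
        rw [add_zero] at h
        exact (left_eq_add.mp h)
      set Dh : S →+ S := AddMonoidHom.mk' D hDadd with hDh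
      have hmain : ∀ c e : ℕ →₀ R,
          D ((c.sum f) * (e.sum f)) = (c.sum f) * D (e.sum f) + D (c.sum f) * (e.sum f) := by
        intro c e
        rw [hDsum, hDsum]
        rw [Finsupp.sum, Finsupp.sum, Finsupp.sum, Finsupp.sum]
        rw [Finset.sum_mul_sum, Finset.sum_mul_sum, Finset.sum_mul_sum]
        have hmap : D (∑ i ∈ c.support, ∑ j ∈ e.support, f i (c i) * f j (e j))
            = ∑ i ∈ c.support, ∑ j ∈ e.support, D (f i (c i) * f j (e j)) := by
          show Dh _ = _
          rw [map_sum]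
          exact Finset.sum_congr rfl fun i _ => map_sum Dh _ _
        rw [hmap]
        rw [← Finset.sum_add_distrib]
        refine Finset.sum_congr rfl fun i _ => ?_
        rw [← Finset.sum_add_distrib]
        exact Finset.sum_congr rfl fun j _ => hcore i (c i) (e j) j
      intro s t
      have := hmain (rep s) (rep t)
      rwa [← hrep1, ← hrep1] at this
    refine ⟨D, hDadd, hDleib, ?_, ?_⟩
    · intro r
      have h := hDsingle 0 r
      simpa using h
    · have h := hDsingle 1 1
      simp [hd₁1] at h
      simpa using h
end
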